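/- For any two consecutive steps of the AAVF method one has the two-step recursion q_{n+1} − 2cos(hΩ) q_n + q_{n−1} = h² φ₂(h²Ω²) [∫₀¹ f((1−σ)q_n + σq_{n+1}) dσ + ∫₀¹ f((1−σ)q_{n−1} + σq_n) dσ]. -/

import Mathlib

/-!
Substituting the first step into the second eliminates `p_n`. The coefficient of `q_{n-1}` is then
`1 - cos² x - x sinc x · sin x = 1 - cos² x - sin² x = 0`, and that of the older averaged integral
is `h² (sinc² x - (1 + cos x) φ₂(x²)) = 0` because `sin² x = (1 - cos x)(1 + cos x)`; here `x = hω`.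
-/

noncomputable def phi2 (V : ℝ) : ℝ :=
  if V = 0 then 1/2 else (1 - Real.cos (Real.sqrt V)) / V

noncomputable def sinc (y : ℝ) : ℝ :=
  if y = 0 then 1 else Real.sin y / y

lemma mul_sinc (x : ℝ) : x * sinc x = Real.sin x := by
  by_cases hx : x = 0
  · simp [hx]
  · rw [sinc, if_neg hx]
    field_simp

lemma phi2_sq_of_ne_zero {x : ℝ} (hx : x ≠ 0) : phi2 (x ^ 2) = (1 - Real.cos x) / x ^ 2 := by
  rw [phi2, if_neg (pow_ne_zero 2 hx), Real.sqrt_sq_eq_abs, Real.cos_abs]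

lemma sinc_sq (x : ℝ) : sinc x ^ 2 = (1 + Real.cos x) * phi2 (x ^ 2) := by
  by_cases hx : x = 0
  · norm_num [hx, sinc, phi2]
  · rw [phi2_sq_of_ne_zero hx, sinc, if_neg hx, div_pow, Real.sin_sq]
    field_simp
    ring

lemma aavf_two_step (h ω q₀ p₀ q₁ p₁ q₂ I₀ I₁ : ℝ)
    (hq₁ : q₁ = Real.cos (h * ω) * q₀ + h * sinc (h * ω) * p₀ + h ^ 2 * phi2 ((h * ω) ^ 2) * I₀)
    (hp₁ : p₁ = -ω * Real.sin (h * ω) * q₀ + Real.cos (h * ω) * p₀ + h * sinc (h * ω) * I₀)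
    (hq₂ : q₂ = Real.cos (h * ω) * q₁ + h * sinc (h * ω) * p₁ + h ^ 2 * phi2 ((h * ω) ^ 2) * I₁) :
    q₂ - 2 * Real.cos (h * ω) * q₁ + q₀ = h ^ 2 * phi2 ((h * ω) ^ 2) * (I₁ + I₀) := by
  subst hq₂ hp₁ hq₁
  linear_combination (-q₀ * Real.sin (h * ω)) * mul_sinc (h * ω)
    - q₀ * Real.sin_sq_add_cos_sq (h * ω) + (h ^ 2 * I₀) * sinc_sq (h * ω)

theorem stmt14_general (n : ℕ) (Ω : Fin n → ℝ) (h : ℝ)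
    (f : (Fin n → ℝ) → (Fin n → ℝ))
    (qm q p0 q1 : Fin n → ℝ)
    -- step from (qm, p0') to (q, p0) with averaged integral Im, then (q,p0) to (q1,p1) with I
    (pm : Fin n → ℝ)
    (hqa : ∀ j, q j = Real.cos (h * Ω j) * qm j + h * sinc (h * Ω j) * pm j
        + h^2 * phi2 ((h * Ω j)^2) * ∫ σ in (0:ℝ)..1, f ((1 - σ) • qm + σ • q) j)
    (hpa : ∀ j, p0 j = -(Ω j) * Real.sin (h * Ω j) * qm j + Real.cos (h * Ω j) * pm j
        + h * sinc (h * Ω j) * ∫ σ in (0:ℝ)..1, f ((1 - σ) • qm + σ • q) j)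
    (hqb : ∀ j, q1 j = Real.cos (h * Ω j) * q j + h * sinc (h * Ω j) * p0 j
        + h^2 * phi2 ((h * Ω j)^2) * ∫ σ in (0:ℝ)..1, f ((1 - σ) • q + σ • q1) j) :
    ∀ j, q1 j - 2 * Real.cos (h * Ω j) * q j + qm j
      = h^2 * phi2 ((h * Ω j)^2) *
          ((∫ σ in (0:ℝ)..1, f ((1 - σ) • q + σ • q1) j)
            + ∫ σ in (0:ℝ)..1, f ((1 - σ) • qm + σ • q) j) := fun j =>
  aavf_two_step h (Ω j) _ _ _ _ _ _ _ (hqa j) (hpa j) (hqb j)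

/-- Two consecutive AAVF steps satisfy the two-step recursion
`q_{n+1} − 2cos(hΩ)q_n + q_{n−1} = h²φ₂(h²Ω²)[∫₀¹f((1−σ)q_n+σq_{n+1})dσ
 + ∫₀¹f((1−σ)q_{n−1}+σq_n)dσ]`. -/
theorem stmt14 (n : ℕ) (Ω : Fin n → ℝ) (hΩ : ∀ j, 0 < Ω j) (h : ℝ) (hh : 0 < h)
    (f : (Fin n → ℝ) → (Fin n → ℝ))
    (qm q p0 q1 p1 : Fin n → ℝ)
    -- step from (qm, p0') to (q, p0) with averaged integral Im, then (q,p0) to (q1,p1) with I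
    (pm : Fin n → ℝ)
    (hqa : ∀ j, q j = Real.cos (h * Ω j) * qm j + h * sinc (h * Ω j) * pm j
        + h^2 * phi2 ((h * Ω j)^2) * ∫ σ in (0:ℝ)..1, f ((1 - σ) • qm + σ • q) j)
    (hpa : ∀ j, p0 j = -(Ω j) * Real.sin (h * Ω j) * qm j + Real.cos (h * Ω j) * pm j
        + h * sinc (h * Ω j) * ∫ σ in (0:ℝ)..1, f ((1 - σ) • qm + σ • q) j)
    (hqb : ∀ j, q1 j = Real.cos (h * Ω j) * q j + h * sinc (h * Ω j) * p0 j
        + h^2 * phi2 ((h * Ω j)^2) * ∫ σ in (0:ℝ)..1, f ((1 - σ) • q + σ • q1) j)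
    (hpb : ∀ j, p1 j = -(Ω j) * Real.sin (h * Ω j) * q j + Real.cos (h * Ω j) * p0 j
        + h * sinc (h * Ω j) * ∫ σ in (0:ℝ)..1, f ((1 - σ) • q + σ • q1) j) :
    ∀ j, q1 j - 2 * Real.cos (h * Ω j) * q j + qm j
      = h^2 * phi2 ((h * Ω j)^2) *
          ((∫ σ in (0:ℝ)..1, f ((1 - σ) • q + σ • q1) j)
            + ∫ σ in (0:ℝ)..1, f ((1 - σ) • qm + σ • q) j) :=
  stmt14_general n Ω h f qm q p0 q1 pm hqa hpa hqb
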